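/- Let p : ℝᴺ → ℝ be C¹ with ∇p(x₀) ≠ 0, and θ ∈ (0, π/2). Then for every sufficiently small ε > 0, the maximum of p over the closed ball {x : |x - x₀| ≤ ε} equals the maximum of p over the spherical cap {x : |x - x₀| = ε, (x - x₀)·∇p(x₀) ≥ ε|∇p(x₀)| cos θ}. -/

import Mathlib

open Real
open scoped InnerProductSpace

/-!
Near `x₀` the derivative of `p` stays within `κ = (1 - cos θ)‖∇p(x₀)‖ / 2` of `Dp(x₀)`. A maximiser
of `p` on the closed ball cannot be interior, since `Dp` does not vanish there, so it lies on the
sphere. By the first-order Taylor estimate, a sphere point `x` with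
`⟪x - x₀, ∇p(x₀)⟫ < ε ‖∇p(x₀)‖ cos θ` has a strictly smaller value than the pole
`x₀ + ε ∇p(x₀) / ‖∇p(x₀)‖`, so the maximiser lies in the cap, and both suprema equal its value.
-/

open Metric Set

theorem IsMaxOn.csSup_image_eq {α β : Type*} [ConditionallyCompleteLattice β] {f : α → β}
    {s t : Set α} {a : α} (hmax : IsMaxOn f t a) (hst : s ⊆ t) (ha : a ∈ s) :
    sSup (f '' t) = sSup (f '' s) := by
  have hsup : ∀ u ⊆ t, a ∈ u → sSup (f '' u) = f a := fun u hu hau =>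
    IsGreatest.csSup_eq ⟨mem_image_of_mem f hau, forall_mem_image.2 fun _ hx => hmax (hu hx)⟩
  rw [hsup t subset_rfl (hst ha), hsup s hst ha]

theorem IsMaxOn.dist_eq_of_fderiv_ne_zero {E : Type*} [NormedAddCommGroup E] [NormedSpace ℝ E]
    {f : E → ℝ} {x₀ x : E} {ε : ℝ} (hmax : IsMaxOn f (closedBall x₀ ε) x)
    (hx : x ∈ closedBall x₀ ε) (hf : fderiv ℝ f x ≠ 0) : dist x x₀ = ε := by
  by_contra hne
  have hx_ball : x ∈ ball x₀ ε := mem_ball.2 (lt_of_le_of_ne (mem_closedBall.1 hx) hne)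
  have hnhds : closedBall x₀ ε ∈ nhds x :=
    Filter.mem_of_superset (isOpen_ball.mem_nhds hx_ball) ball_subset_closedBall
  exact hf (hmax.isLocalMax hnhds).fderiv_eq_zero

theorem norm_div_norm_smul_self {E : Type*} [NormedAddCommGroup E] [NormedSpace ℝ E] {ε : ℝ}
    {g : E} (hε : 0 ≤ ε) (hg : g ≠ 0) : ‖(ε / ‖g‖) • g‖ = ε := by
  rw [norm_smul, norm_div, norm_norm, Real.norm_of_nonneg hε,
    div_mul_cancel₀ _ (norm_ne_zero_iff.2 hg)]

section InnerProductSpace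

variable {E : Type*} [NormedAddCommGroup E] [InnerProductSpace ℝ E]

def sphericalCap (x₀ : E) (ε : ℝ) (v : E) (θ : ℝ) : Set E :=
  {x | ‖x - x₀‖ = ε ∧ cos θ * (ε * ‖v‖) ≤ ⟪x - x₀, v⟫_ℝ}

theorem sphericalCap_subset_closedBall (x₀ : E) (ε : ℝ) (v : E) (θ : ℝ) :
    sphericalCap x₀ ε v θ ⊆ closedBall x₀ ε := fun _ hx =>
  mem_closedBall_iff_norm.2 hx.1.le

theorem lt_apply_pole_of_inner_lt {p : E → ℝ} {x₀ g x : E} {ε κ c : ℝ} (hg : g ≠ 0)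
    (htaylor : ∀ y, ‖y - x₀‖ = ε → |p y - p x₀ - ⟪g, y - x₀⟫_ℝ| ≤ κ * ε)
    (hκ : 2 * κ ≤ (1 - c) * ‖g‖) (hx : ‖x - x₀‖ = ε) (hlow : ⟪x - x₀, g⟫_ℝ < c * (ε * ‖g‖)) :
    p x < p (x₀ + (ε / ‖g‖) • g) := by
  have hε : 0 ≤ ε := hx ▸ norm_nonneg _
  set w := x₀ + (ε / ‖g‖) • g
  have hw : w - x₀ = (ε / ‖g‖) • g := add_sub_cancel_left x₀ _
  have hw_norm : ‖w - x₀‖ = ε := hw ▸ norm_div_norm_smul_self hε hg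
  have hw_inner : ⟪g, w - x₀⟫_ℝ = ε * ‖g‖ := by
    rw [hw, inner_smul_right, real_inner_self_eq_norm_mul_norm]
    field_simp
  have hx_le := (abs_le.1 (htaylor x hx)).2
  have hw_ge := (abs_le.1 (htaylor w hw_norm)).1
  rw [real_inner_comm] at hlow
  nlinarith [mul_le_mul_of_nonneg_right hκ hε]

theorem IsMaxOn.mem_sphericalCap [CompleteSpace E] {p : E → ℝ} {x₀ x : E} {ε κ θ : ℝ}
    (hp : ∀ y ∈ closedBall x₀ ε, DifferentiableAt ℝ p y)
    (hclose : ∀ y ∈ closedBall x₀ ε, ‖fderiv ℝ p y - fderiv ℝ p x₀‖ ≤ κ)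
    (hκ : 2 * κ ≤ (1 - cos θ) * ‖gradient p x₀‖) (hκ_lt : κ < ‖gradient p x₀‖)
    (hmax : IsMaxOn p (closedBall x₀ ε) x) (hx : x ∈ closedBall x₀ ε) :
    x ∈ sphericalCap x₀ ε (gradient p x₀) θ := by
  have hnorm : ‖fderiv ℝ p x₀‖ = ‖gradient p x₀‖ := by
    rw [← toDual_gradient, LinearIsometryEquiv.norm_map]
  have hg : gradient p x₀ ≠ 0 :=
    norm_pos_iff.1 (((norm_nonneg _).trans (hclose x hx)).trans_lt hκ_lt)
  have hfx : fderiv ℝ p x ≠ 0 := fun h0 => by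
    have hbound := hclose x hx
    rw [h0, zero_sub, norm_neg, hnorm] at hbound
    linarith
  have hsphere : ‖x - x₀‖ = ε := by
    rw [← dist_eq_norm]; exact hmax.dist_eq_of_fderiv_ne_zero hx hfx
  have hε : 0 ≤ ε := hsphere ▸ norm_nonneg _
  have htaylor : ∀ y, ‖y - x₀‖ = ε →
      |p y - p x₀ - ⟪gradient p x₀, y - x₀⟫_ℝ| ≤ κ * ε := fun y hy => by
    have h := (convex_closedBall x₀ ε).norm_image_sub_le_of_norm_fderiv_le' hp hclose
      (mem_closedBall_self hε) (mem_closedBall_iff_norm.2 hy.le)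
    rwa [← inner_gradient_left, Real.norm_eq_abs, hy] at h
  refine ⟨hsphere, not_lt.1 fun hlow => ?_⟩
  have hpole := lt_apply_pole_of_inner_lt hg htaylor hκ hsphere hlow
  have hpole_mem : x₀ + (ε / ‖gradient p x₀‖) • gradient p x₀ ∈ closedBall x₀ ε := by
    rw [mem_closedBall_iff_norm, add_sub_cancel_left, norm_div_norm_smul_self hε hg]
  exact (hmax hpole_mem).not_gt hpole

end InnerProductSpace

theorem stmt_5 (N : ℕ) (p : EuclideanSpace ℝ (Fin N) → ℝ)
    (x₀ : EuclideanSpace ℝ (Fin N))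
    (hp : ContDiff ℝ 1 p) (hgrad : gradient p x₀ ≠ 0)
    (θ : ℝ) (hθ : θ ∈ Set.Ioo 0 (π / 2)) :
    ∃ ε₀ : ℝ, 0 < ε₀ ∧
      ∀ ε : ℝ, 0 < ε → ε ≤ ε₀ →
        sSup (p '' {x | ‖x - x₀‖ ≤ ε})
          = sSup (p '' {x | ‖x - x₀‖ = ε ∧
              Real.cos θ * (ε * ‖gradient p x₀‖) ≤ ⟪x - x₀, gradient p x₀⟫_ℝ}) := by
  obtain ⟨hθ0, hθ2⟩ := hθ
  set g := gradient p x₀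
  have hcos : cos θ < 1 := by
    simpa using cos_lt_cos_of_nonneg_of_le_pi le_rfl (by linarith [pi_pos]) hθ0
  have hcos0 : 0 < cos θ := cos_pos_of_mem_Ioo ⟨by linarith [pi_pos], hθ2⟩
  have hg : 0 < ‖g‖ := norm_pos_iff.2 hgrad
  set κ := (1 - cos θ) * ‖g‖ / 2 with hκ_def
  have hκ : 0 < κ := by nlinarith
  obtain ⟨δ, hδ, hclose⟩ :=
    Metric.continuousAt_iff.1 (hp.continuous_fderiv one_ne_zero).continuousAt κ hκ
  refine ⟨δ / 2, half_pos hδ, fun ε hε hεδ => ?_⟩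
  obtain ⟨x, hx, hmax⟩ := (isCompact_closedBall x₀ ε).exists_isMaxOn
    (nonempty_closedBall.2 hε.le) hp.continuous.continuousOn
  have hclose_ball : ∀ y ∈ closedBall x₀ ε, ‖fderiv ℝ p y - fderiv ℝ p x₀‖ ≤ κ := fun y hy =>
    dist_eq_norm (fderiv ℝ p y) _ ▸ (hclose ((mem_closedBall.1 hy).trans_lt (by linarith))).le
  have hcap := hmax.mem_sphericalCap (fun y _ => (hp.differentiable one_ne_zero) y)
    hclose_ball (by linarith) (by nlinarith) hx
  have hball : {x | ‖x - x₀‖ ≤ ε} = closedBall x₀ ε := by ext; simp [dist_eq_norm]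
  rw [hball]
  exact hmax.csSup_image_eq (sphericalCap_subset_closedBall x₀ ε g θ) hcap
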